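/- arXiv:1704.07655 — 2 statements merged into one kernel-verified Lean document; each statement's English description precedes it below -/
import Mathlib

section
/- Under conditions (SS1) and (SS2), if i = (i_1,…,i_n) is the residue sequence of some standard tableau of shape an l-multipartition of n, and i_{r+1} = i_r ± 1 for some 1 ≤ r < n, then the sequence s_r·i obtained by swapping entries r and r+1 is not the residue sequence of any standard tableau of shape an l-multipartition of n. -/
/-- The type `C_ℓ^(1)` folding residue map: reduce mod `2ℓ`, then fold `k ↦ min (k, 2ℓ − k)`. -/
def bar (ℓ : ℕ) (m : ℤ) : ℕ :=
  min ((m % (2 * ℓ)).toNat) (2 * ℓ - (m % (2 * ℓ)).toNat)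

/-- `lam` is an `l`-multipartition of `n`: an `l`-tuple of Young diagrams of total size `n`. -/
def IsMPT (l n : ℕ) (lam : Fin l → YoungDiagram) : Prop :=
  ∑ j : Fin l, (lam j).card = n

/-- `T` is a standard tableau of shape the `l`-multipartition `lam` of `n`:
`T k` is the node (component, row, column) containing the entry `k+1`; `T` is a bijection
onto the set of nodes of `lam`, and every prefix of entries forms a Young diagram in each
component (equivalently, entries increase along rows and columns). -/
def IsStdM (l n : ℕ) (lam : Fin l → YoungDiagram) (T : Fin n → Fin l × ℕ × ℕ) : Prop :=
  Function.Injective T ∧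
  (∀ (j : Fin l) (p : ℕ × ℕ), p ∈ lam j ↔ ∃ k : Fin n, T k = (j, p)) ∧
  ∀ (m : ℕ) (j : Fin l), IsLowerSet {p : ℕ × ℕ | ∃ k : Fin n, k.val < m ∧ T k = (j, p)}

/-- The residue sequence of a tableau: the `k`-th entry is the residue
`bar (κ_j + c − r)` of the node `(j, r, c)` containing `k+1`. -/
def resSeq (ℓ l n : ℕ) (κ : Fin l → ℤ) (T : Fin n → Fin l × ℕ × ℕ) : Fin n → ℕ :=
  fun k => bar ℓ (κ (T k).1 + ((T k).2.2 : ℤ) - ((T k).2.1 : ℤ))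

/-- Condition (SS1): `⟨Λ_κ, α^∨_{i,n}⟩ ≤ 1` for all `i ∈ I`, i.e. for each `i` at most one
component `j` has `bar κ_j` among `i, i+1, …, i+n−1` (indices mod `ℓ+1`). -/
def SS1 (ℓ l n : ℕ) (κ : Fin l → ℤ) : Prop :=
  ∀ i : ℕ, i ≤ ℓ → ∀ j j' : Fin l,
    (∃ k < n, bar ℓ (κ j) = (i + k) % (ℓ + 1)) →
    (∃ k < n, bar ℓ (κ j') = (i + k) % (ℓ + 1)) → j = j'

/-- Condition (SS2): `(n−1)/2 ≤ bar κ_j ≤ ℓ − (n−1)/2` for every `j`. -/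
def SS2 (ℓ l n : ℕ) (κ : Fin l → ℤ) : Prop :=
  ∀ j : Fin l, (n : ℤ) - 1 ≤ 2 * bar ℓ (κ j) ∧
    2 * (bar ℓ (κ j) : ℤ) ≤ 2 * ℓ - ((n : ℤ) - 1)

lemma bar_le (ℓ : ℕ) (u : ℤ) : bar ℓ u ≤ ℓ := by
  unfold bar; omega

lemma bar_rep (ℓ : ℕ) (hℓ : 1 ≤ ℓ) (u : ℤ) :
    ∃ ε c : ℤ, (ε = 1 ∨ ε = -1) ∧ (bar ℓ u : ℤ) = ε * u + 2 * ℓ * c := by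
  have h2 : (0:ℤ) < 2 * ℓ := by positivity
  have hq0 : 0 ≤ u % (2 * (ℓ:ℤ)) := Int.emod_nonneg u (by omega)
  have hqlt : u % (2 * (ℓ:ℤ)) < 2 * ℓ := Int.emod_lt_of_pos u h2
  have hdef : u % (2 * (ℓ:ℤ)) = u - 2 * ℓ * (u / (2 * ℓ)) := Int.emod_def u (2*ℓ)
  have htn : (((u % (2 * (ℓ:ℤ))).toNat : ℤ)) = u % (2 * ℓ) := Int.toNat_of_nonneg hq0
  unfold bar
  rcases min_cases ((u % (2 * (ℓ:ℕ) : ℤ)).toNat) (2 * ℓ - (u % (2 * (ℓ:ℕ):ℤ)).toNat) with ⟨h, _⟩ | ⟨h, _⟩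
  · refine ⟨1, -(u / (2*ℓ)), Or.inl rfl, ?_⟩
    rw [h]
    rw [htn, hdef]; ring
  · refine ⟨-1, u / (2*ℓ) + 1, Or.inr rfl, ?_⟩
    rw [h]
    have hle : (u % (2 * (ℓ:ℤ))).toNat ≤ 2 * ℓ := by omega
    push_cast [hle]
    rw [htn, hdef]; ring

lemma c_small {L E C : ℤ} (hL : 2 ≤ L) (hE : E = 2 * L * C) (h1 : -(4 * L) < E)
    (h2 : E < 4 * L) : C = -1 ∨ C = 0 ∨ C = 1 := by
  have h3 : C < 2 := by
    by_contra h
    push_neg at h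
    have : 2 * L * 2 ≤ 2 * L * C := mul_le_mul_of_nonneg_left h (by linarith)
    linarith
  have h4 : -2 < C := by
    by_contra h
    push_neg at h
    have : 2 * L * C ≤ 2 * L * (-2) := mul_le_mul_of_nonneg_left h (by linarith)
    linarith
  omega

lemma count_le {n : ℕ} {α : Type*} [DecidableEq α] {T : Fin n → α}
    (m : ℕ) (F : Finset α)
    (hF : ∀ x ∈ F, ∃ k : Fin n, k.1 < m ∧ T k = x) : F.card ≤ m := by
  classical
  have hsub : F ⊆ (Finset.univ.filter fun k : Fin n => k.1 < m).image T := by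
    intro x hx
    obtain ⟨k, hk, he⟩ := hF x hx
    exact Finset.mem_image.mpr ⟨k, by simp [hk], he⟩
  calc F.card ≤ _ := Finset.card_le_card hsub
    _ ≤ (Finset.univ.filter fun k : Fin n => k.1 < m).card := Finset.card_image_le
    _ ≤ (Finset.range m).card := Finset.card_le_card_of_injOn Fin.val
        (by intro a ha; simp at ha ⊢; exact ha) (fun a _ b _ h => Fin.ext h)
    _ = m := Finset.card_range m

lemma card_two_fams {α : Type*} [DecidableEq α] {m : ℕ} (mem : α → Prop)
    (hcount : ∀ F : Finset α, (∀ x ∈ F, mem x) → F.card ≤ m)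
    (f g : ℕ → α) (hf : Function.Injective f) (hg : Function.Injective g)
    (hfg : ∀ x y, f x ≠ g y)
    (b b' : ℕ) (hmf : ∀ x < b, mem (f x)) (hmg : ∀ y < b', mem (g y)) : b + b' ≤ m := by
  have hd : Disjoint ((Finset.range b).image f) ((Finset.range b').image g) := by
    rw [Finset.disjoint_left]
    rintro p h1 h2
    simp only [Finset.mem_image, Finset.mem_range] at h1 h2
    obtain ⟨x, _, hx⟩ := h1
    obtain ⟨y, _, hy⟩ := h2
    exact hfg x y (hx.trans hy.symm)
  have hm := hcount (((Finset.range b).image f) ∪ ((Finset.range b').image g)) ?_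
  · rwa [Finset.card_union_of_disjoint hd, Finset.card_image_of_injective _ hf,
      Finset.card_image_of_injective _ hg, Finset.card_range, Finset.card_range] at hm
  · intro p hp
    rcases Finset.mem_union.mp hp with h | h <;>
      simp only [Finset.mem_image, Finset.mem_range] at h <;> obtain ⟨x, hx, he⟩ := h
    exacts [he ▸ hmf x hx, he ▸ hmg x hx]

/-- Two addable nodes of the same component with residues differing by at most 1
cannot exist (when distinct, in distinct rows). -/
lemma aux_same (ℓ n m : ℕ) (hℓ : 2 ≤ ℓ) (hnℓ : n ≤ ℓ + 1) (hm : m + 2 ≤ n)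
    (κj : ℤ) (hκ1 : (n:ℤ) - 1 ≤ 2 * bar ℓ κj) (hκ2 : 2 * (bar ℓ κj : ℤ) ≤ 2 * ℓ - ((n:ℤ) - 1))
    (mem : ℕ × ℕ → Prop)
    (hcount : ∀ F : Finset (ℕ × ℕ), (∀ p ∈ F, mem p) → F.card ≤ m)
    (a1 b1 a2 b2 : ℕ) (h12 : a1 < a2)
    (LS1 : ∀ p : ℕ × ℕ, p ≤ (a1, b1) → p ≠ (a1, b1) → mem p)
    (LS2 : ∀ p : ℕ × ℕ, p ≤ (a2, b2) → p ≠ (a2, b2) → mem p)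
    (N1 : ¬ mem (a1, b1))
    (hδ : ((bar ℓ (κj + (b1:ℤ) - (a1:ℤ)) : ℤ) - (bar ℓ (κj + (b2:ℤ) - (a2:ℤ)) : ℤ)).natAbs ≤ 1) :
    False := by
  -- b2 < b1
  have hb : b2 < b1 := by
    by_contra h
    push_neg at h
    exact N1 (LS2 (a1, b1) (Prod.mk_le_mk.mpr ⟨h12.le, h⟩) (by simp only [ne_eq, Prod.mk.injEq]; omega))
  -- counting: rows
  have hrows : b1 + b2 ≤ m :=
    card_two_fams mem hcount (fun x => (a1, x)) (fun x => (a2, x))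
      (fun x y h => by simpa using h) (fun x y h => by simpa using h)
      (fun x y => by simp only [ne_eq, Prod.mk.injEq]; omega) b1 b2
      (fun x hx => LS1 (a1, x) (Prod.mk_le_mk.mpr ⟨le_rfl, hx.le⟩)
        (by simp only [ne_eq, Prod.mk.injEq]; omega))
      (fun x hx => LS2 (a2, x) (Prod.mk_le_mk.mpr ⟨le_rfl, hx.le⟩)
        (by simp only [ne_eq, Prod.mk.injEq]; omega))
  -- counting: columns
  have hcols : a1 + a2 ≤ m :=
    card_two_fams mem hcount (fun y => (y, b1)) (fun y => (y, b2))
      (fun x y h => by simpa using h) (fun x y h => by simpa using h)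
      (fun x y => by simp only [ne_eq, Prod.mk.injEq]; omega) a1 a2
      (fun y hy => LS1 (y, b1) (Prod.mk_le_mk.mpr ⟨hy.le, le_rfl⟩)
        (by simp only [ne_eq, Prod.mk.injEq]; omega))
      (fun y hy => LS2 (y, b2) (Prod.mk_le_mk.mpr ⟨hy.le, le_rfl⟩)
        (by simp only [ne_eq, Prod.mk.injEq]; omega))
  -- counting: mixed (row a1 and column b2 minus row a1)
  have hmix : b1 + (a2 - 1) ≤ m :=
    card_two_fams mem hcount (fun x => (a1, x)) (fun y => ((if y < a1 then y else y + 1), b2))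
      (fun x y h => by simpa using h)
      (fun x y h => by simp only [Prod.mk.injEq] at h; split_ifs at h <;> omega)
      (fun x y => by simp only [ne_eq, Prod.mk.injEq]; split_ifs <;> omega) b1 (a2 - 1)
      (fun x hx => LS1 (a1, x) (Prod.mk_le_mk.mpr ⟨le_rfl, hx.le⟩)
        (by simp only [ne_eq, Prod.mk.injEq]; omega))
      (fun y hy => by
        refine LS2 _ (Prod.mk_le_mk.mpr ⟨?_, le_rfl⟩) ?_
        · split_ifs <;> omega
        · simp only [ne_eq, Prod.mk.injEq]; split_ifs <;> omega)
  -- the arithmetic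
  obtain ⟨ε1, c1, hε1, e1⟩ := bar_rep ℓ (by omega) (κj + (b1:ℤ) - (a1:ℤ))
  obtain ⟨ε2, c2, hε2, e2⟩ := bar_rep ℓ (by omega) (κj + (b2:ℤ) - (a2:ℤ))
  obtain ⟨ε0, c0, hε0, e0⟩ := bar_rep ℓ (by omega) κj
  have hβle : (bar ℓ κj : ℤ) ≤ (ℓ:ℤ) := by exact_mod_cast bar_le ℓ κj
  set ρ1 := (bar ℓ (κj + (b1:ℤ) - (a1:ℤ)) : ℤ) with hρ1
  set ρ2 := (bar ℓ (κj + (b2:ℤ) - (a2:ℤ)) : ℤ) with hρ2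
  set β := (bar ℓ κj : ℤ) with hβ
  have hδ' : -1 ≤ ρ1 - ρ2 ∧ ρ1 - ρ2 ≤ 1 := by
    constructor <;> omega
  rcases hε1 with rfl | rfl <;> rcases hε2 with rfl | rfl
  · -- ε1 = 1, ε2 = 1 : difference case
    have hE : ρ1 - ρ2 - (((b1:ℤ) - a1) - ((b2:ℤ) - a2)) = 2 * ℓ * (c1 - c2) := by
      linear_combination e1 - e2
    have h0 : ρ1 - ρ2 - (((b1:ℤ) - a1) - ((b2:ℤ) - a2)) = 0 := by
      refine Int.eq_zero_of_abs_lt_dvd ⟨c1 - c2, hE⟩ (abs_lt.mpr ⟨?_, ?_⟩) <;> omega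
    omega
  · -- ε1 = 1, ε2 = -1 : sum case
    rcases hε0 with rfl | rfl
    · have hE : ρ1 - ρ2 - (((b1:ℤ) - a1) + ((b2:ℤ) - a2)) - 2 * β
          = 2 * ℓ * (c1 - c2 - 2 * c0) := by linear_combination e1 - e2 - 2 * e0
      have hC := c_small (by exact_mod_cast hℓ : (2:ℤ) ≤ (ℓ:ℤ)) hE (by omega) (by omega)
      rcases hC with h | h | h <;> rw [h] at hE <;> omega
    · have hE : ρ1 - ρ2 - (((b1:ℤ) - a1) + ((b2:ℤ) - a2)) + 2 * β
          = 2 * ℓ * (c1 - c2 + 2 * c0) := by linear_combination e1 - e2 + 2 * e0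
      have hC := c_small (by exact_mod_cast hℓ : (2:ℤ) ≤ (ℓ:ℤ)) hE (by omega) (by omega)
      rcases hC with h | h | h <;> rw [h] at hE <;> omega
  · -- ε1 = -1, ε2 = 1 : sum case
    rcases hε0 with rfl | rfl
    · have hE : ρ1 - ρ2 + (((b1:ℤ) - a1) + ((b2:ℤ) - a2)) + 2 * β
          = 2 * ℓ * (c1 - c2 + 2 * c0) := by linear_combination e1 - e2 + 2 * e0
      have hC := c_small (by exact_mod_cast hℓ : (2:ℤ) ≤ (ℓ:ℤ)) hE (by omega) (by omega)
      rcases hC with h | h | h <;> rw [h] at hE <;> omega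
    · have hE : ρ1 - ρ2 + (((b1:ℤ) - a1) + ((b2:ℤ) - a2)) - 2 * β
          = 2 * ℓ * (c1 - c2 - 2 * c0) := by linear_combination e1 - e2 - 2 * e0
      have hC := c_small (by exact_mod_cast hℓ : (2:ℤ) ≤ (ℓ:ℤ)) hE (by omega) (by omega)
      rcases hC with h | h | h <;> rw [h] at hE <;> omega
  · -- ε1 = -1, ε2 = -1 : difference case
    have hE : ρ1 - ρ2 + (((b1:ℤ) - a1) - ((b2:ℤ) - a2)) = 2 * ℓ * (c1 - c2) := by
      linear_combination e1 - e2
    have h0 : ρ1 - ρ2 + (((b1:ℤ) - a1) - ((b2:ℤ) - a2)) = 0 := by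
      refine Int.eq_zero_of_abs_lt_dvd ⟨c1 - c2, hE⟩ (abs_lt.mpr ⟨?_, ?_⟩) <;> omega
    omega

lemma cross_arith (ℓ n m : ℕ) (hℓ : 2 ≤ ℓ) (hnℓ : n ≤ ℓ + 1) (hm : m + 2 ≤ n)
    (β β' ρ ρ' t t' : ℤ) (u v w1 w2 C : ℤ)
    (hu : u = 1 ∨ u = -1) (hv : v = 1 ∨ v = -1)
    (hw1 : w1 = 1 ∨ w1 = -1) (hw2 : w2 = 1 ∨ w2 = -1)
    (hβ0 : 0 ≤ β) (hβl : β ≤ ℓ) (hβ'0 : 0 ≤ β') (hβ'l : β' ≤ ℓ)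
    (h2β1 : (n:ℤ) - 1 ≤ 2*β) (h2β2 : 2*β ≤ 2*ℓ - ((n:ℤ)-1))
    (h2β'1 : (n:ℤ) - 1 ≤ 2*β') (h2β'2 : 2*β' ≤ 2*ℓ - ((n:ℤ)-1))
    (hsep : β' + n ≤ β ∨ β + n ≤ β')
    (hδ1 : -1 ≤ ρ - ρ') (hδ2 : ρ - ρ' ≤ 1)
    (A A' : ℤ) (hA0 : 0 ≤ A) (hA'0 : 0 ≤ A') (hAA : A + A' ≤ m)
    (ht1 : -A ≤ t) (ht2 : t ≤ A) (ht1' : -A' ≤ t') (ht2' : t' ≤ A')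
    (hE : ρ - ρ' - w1*t + w2*t' - u*β + v*β' = 2*ℓ*C) : False := by
  rcases hw1 with rfl | rfl <;> rcases hw2 with rfl | rfl <;>
    rcases hu with rfl | rfl <;> rcases hv with rfl | rfl <;>
    (rcases c_small (show (2:ℤ) ≤ ((ℓ:ℕ):ℤ) by exact_mod_cast hℓ) hE (by omega) (by omega)
      with h | h | h <;> rw [h] at hE <;> omega)

set_option maxHeartbeats 1000000 in
lemma core (ℓ l n : ℕ) (hℓ : 2 ≤ ℓ) (κ : Fin l → ℤ) (h1 : SS1 ℓ l n κ) (h2 : SS2 ℓ l n κ)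
    (T S : Fin n → Fin l × ℕ × ℕ)
    (hTinj : Function.Injective T)
    (hTLS : ∀ (M : ℕ) (j : Fin l), IsLowerSet {p : ℕ × ℕ | ∃ k : Fin n, k.val < M ∧ T k = (j, p)})
    (hSinj : Function.Injective S)
    (hSLS : ∀ (M : ℕ) (j : Fin l), IsLowerSet {p : ℕ × ℕ | ∃ k : Fin n, k.val < M ∧ S k = (j, p)})
    (m : ℕ) (hm : m + 2 ≤ n) (hmn : m < n)
    (hpre : ∀ k : Fin n, k.val < m → T k = S k)
    (hδ : ((resSeq ℓ l n κ T ⟨m, hmn⟩ : ℤ) - (resSeq ℓ l n κ S ⟨m, hmn⟩ : ℤ)).natAbs ≤ 1) :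
    T ⟨m, hmn⟩ = S ⟨m, hmn⟩ := by
  classical
  rcases hxT : T ⟨m, hmn⟩ with ⟨j, a, b⟩
  rcases hxS : S ⟨m, hmn⟩ with ⟨j', a', b'⟩
  set mem : Fin l × ℕ × ℕ → Prop := fun x => ∃ k : Fin n, k.1 < m ∧ T k = x with hmemdef
  have hcount : ∀ F : Finset (Fin l × ℕ × ℕ), (∀ x ∈ F, mem x) → F.card ≤ m :=
    fun F hF => count_le m F hF
  have hST : ∀ x, (∃ k : Fin n, k.1 < m ∧ S k = x) ↔ mem x := by
    intro x
    constructor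
    · rintro ⟨k, hk, he⟩; exact ⟨k, hk, (hpre k hk).trans he⟩
    · rintro ⟨k, hk, he⟩; exact ⟨k, hk, (hpre k hk).symm.trans he⟩
  have LS_T : ∀ p : ℕ × ℕ, p ≤ (a, b) → p ≠ (a, b) → mem (j, p) := by
    intro p hle hne
    have hmem1 : ((a, b) : ℕ × ℕ) ∈ {p : ℕ × ℕ | ∃ k : Fin n, k.val < m + 1 ∧ T k = (j, p)} :=
      ⟨⟨m, hmn⟩, Nat.lt_succ_self m, hxT⟩
    obtain ⟨k, hk, hTk⟩ := hTLS (m + 1) j hle hmem1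
    refine ⟨k, ?_, hTk⟩
    rcases Nat.lt_or_ge k.1 m with h | h
    · exact h
    · exfalso
      have hkm : k = ⟨m, hmn⟩ := Fin.ext (show k.1 = m by omega)
      rw [hkm, hxT] at hTk
      simp only [Prod.mk.injEq] at hTk
      exact hne hTk.2.symm
  have N_T : ¬ mem (j, a, b) := by
    rintro ⟨k, hk, he⟩
    have hkm : k = ⟨m, hmn⟩ := hTinj (he.trans hxT.symm)
    rw [hkm] at hk
    exact absurd hk (lt_irrefl m)
  have LS_S : ∀ p : ℕ × ℕ, p ≤ (a', b') → p ≠ (a', b') → mem (j', p) := by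
    intro p hle hne
    have hmem1 : ((a', b') : ℕ × ℕ) ∈ {p : ℕ × ℕ | ∃ k : Fin n, k.val < m + 1 ∧ S k = (j', p)} :=
      ⟨⟨m, hmn⟩, Nat.lt_succ_self m, hxS⟩
    obtain ⟨k, hk, hSk⟩ := hSLS (m + 1) j' hle hmem1
    have hklt : k.1 < m := by
      rcases Nat.lt_or_ge k.1 m with h | h
      · exact h
      · exfalso
        have hkm : k = ⟨m, hmn⟩ := Fin.ext (show k.1 = m by omega)
        rw [hkm, hxS] at hSk
        simp only [Prod.mk.injEq] at hSk
        exact hne hSk.2.symm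
    exact (hST (j', p)).mp ⟨k, hklt, hSk⟩
  have N_S : ¬ mem (j', a', b') := by
    intro h
    obtain ⟨k, hk, he⟩ := (hST _).mpr h
    have hkm : k = ⟨m, hmn⟩ := hSinj (he.trans hxS.symm)
    rw [hkm] at hk
    exact absurd hk (lt_irrefl m)
  have hρT : resSeq ℓ l n κ T ⟨m, hmn⟩ = bar ℓ (κ j + (b:ℤ) - (a:ℤ)) := by
    simp [resSeq, hxT]
  have hρS : resSeq ℓ l n κ S ⟨m, hmn⟩ = bar ℓ (κ j' + (b':ℤ) - (a':ℤ)) := by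
    simp [resSeq, hxS]
  rw [hρT, hρS] at hδ
  have hnℓ : n ≤ ℓ + 1 := by
    have h2j := h2 j
    have hb1 := bar_le ℓ (κ j)
    omega
  by_cases hjj : j = j'
  · subst hjj
    by_cases habe : a = a' ∧ b = b'
    · rw [habe.1, habe.2]
    · exfalso
      have hane : a ≠ a' := by
        intro hae
        subst hae
        have hbne : b ≠ b' := fun h => habe ⟨rfl, h⟩
        rcases Nat.lt_or_ge b b' with h | h
        · exact N_T (LS_S (a, b) (Prod.mk_le_mk.mpr ⟨le_rfl, h.le⟩)
            (by simp only [ne_eq, Prod.mk.injEq]; omega))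
        · exact N_S (LS_T (a, b') (Prod.mk_le_mk.mpr ⟨le_rfl, by omega⟩)
            (by simp only [ne_eq, Prod.mk.injEq]; omega))
      have hcount' : ∀ F : Finset (ℕ × ℕ), (∀ p ∈ F, mem (j, p)) → F.card ≤ m := by
        intro F hF
        have h := hcount (F.image fun p => (j, p)) (by
          intro x hx
          simp only [Finset.mem_image] at hx
          obtain ⟨p, hp, rfl⟩ := hx
          exact hF p hp)
        rwa [Finset.card_image_of_injective _ (fun p q hpq => by simpa using hpq)] at h
      have h2j := h2 j
      rcases Nat.lt_or_ge a a' with h | h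
      · exact aux_same ℓ n m hℓ hnℓ hm (κ j) h2j.1 h2j.2 (fun p => mem (j, p)) hcount'
          a b a' b' h LS_T LS_S N_T hδ
      · exact aux_same ℓ n m hℓ hnℓ hm (κ j) h2j.1 h2j.2 (fun p => mem (j, p)) hcount'
          a' b' a b (by omega) LS_S LS_T N_S (by omega)
  · exfalso
    have h2j := h2 j
    have h2j' := h2 j'
    have hβle := bar_le ℓ (κ j)
    have hβ'le := bar_le ℓ (κ j')
    have hsep : (bar ℓ (κ j') + n ≤ bar ℓ (κ j)) ∨ (bar ℓ (κ j) + n ≤ bar ℓ (κ j')) := by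
      by_contra hcon
      push_neg at hcon
      obtain ⟨hc1, hc2⟩ := hcon
      rcases Nat.le_total (bar ℓ (κ j)) (bar ℓ (κ j')) with hle | hle
      · refine hjj (h1 (bar ℓ (κ j)) hβle j j' ⟨0, by omega, ?_⟩
          ⟨bar ℓ (κ j') - bar ℓ (κ j), by omega, ?_⟩)
        · rw [Nat.add_zero, Nat.mod_eq_of_lt (by omega)]
        · rw [Nat.add_sub_cancel' hle, Nat.mod_eq_of_lt (by omega)]
      · refine hjj (h1 (bar ℓ (κ j')) hβ'le j j' ⟨bar ℓ (κ j) - bar ℓ (κ j'), by omega, ?_⟩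
          ⟨0, by omega, ?_⟩)
        · rw [Nat.add_sub_cancel' hle, Nat.mod_eq_of_lt (by omega)]
        · rw [Nat.add_zero, Nat.mod_eq_of_lt (by omega)]
    have hhook : (b + a) + (b' + a') ≤ m := by
      refine card_two_fams mem hcount
        (fun x => if x < b then (j, a, x) else (j, x - b, b))
        (fun x => if x < b' then (j', a', x) else (j', x - b', b'))
        ?_ ?_ ?_ (b + a) (b' + a') ?_ ?_
      · intro x y h
        dsimp only at h
        split_ifs at h <;> simp only [Prod.mk.injEq] at h <;> omega
      · intro x y h
        dsimp only at h
        split_ifs at h <;> simp only [Prod.mk.injEq] at h <;> omega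
      · intro x y
        split_ifs <;> simp only [ne_eq, Prod.mk.injEq] <;> rintro ⟨hj, -⟩ <;> exact hjj hj
      · intro x hx
        by_cases hxb : x < b
        · simp only [if_pos hxb]
          exact LS_T (a, x) (Prod.mk_le_mk.mpr ⟨le_rfl, hxb.le⟩)
            (by simp only [ne_eq, Prod.mk.injEq]; omega)
        · simp only [if_neg hxb]
          exact LS_T (x - b, b) (Prod.mk_le_mk.mpr ⟨by omega, le_rfl⟩)
            (by simp only [ne_eq, Prod.mk.injEq]; omega)
      · intro x hx
        by_cases hxb : x < b'
        · simp only [if_pos hxb]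
          exact LS_S (a', x) (Prod.mk_le_mk.mpr ⟨le_rfl, hxb.le⟩)
            (by simp only [ne_eq, Prod.mk.injEq]; omega)
        · simp only [if_neg hxb]
          exact LS_S (x - b', b') (Prod.mk_le_mk.mpr ⟨by omega, le_rfl⟩)
            (by simp only [ne_eq, Prod.mk.injEq]; omega)
    obtain ⟨ε1, c1, hε1, e1⟩ := bar_rep ℓ (by omega) (κ j + (b:ℤ) - (a:ℤ))
    obtain ⟨ε2, c2, hε2, e2⟩ := bar_rep ℓ (by omega) (κ j' + (b':ℤ) - (a':ℤ))
    obtain ⟨ε0, c0, hε0, e0⟩ := bar_rep ℓ (by omega) (κ j)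
    obtain ⟨ε3, c3, hε3, e3⟩ := bar_rep ℓ (by omega) (κ j')
    have hsq0 : ε0 * ε0 = 1 := by rcases hε0 with rfl | rfl <;> norm_num
    have hsq3 : ε3 * ε3 = 1 := by rcases hε3 with rfl | rfl <;> norm_num
    have hE : (bar ℓ (κ j + (b:ℤ) - (a:ℤ)) : ℤ) - (bar ℓ (κ j' + (b':ℤ) - (a':ℤ)) : ℤ)
        - ε1 * ((b:ℤ) - (a:ℤ)) + ε2 * ((b':ℤ) - (a':ℤ))
        - (ε1*ε0) * (bar ℓ (κ j) : ℤ) + (ε2*ε3) * (bar ℓ (κ j') : ℤ)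
        = 2*ℓ*(c1 - c2 - ε1*ε0*c0 + ε2*ε3*c3) := by
      linear_combination e1 - e2 - (ε1*ε0)*e0 + (ε2*ε3)*e3 - (ε1*(κ j))*hsq0 + (ε2*(κ j'))*hsq3
    have hu : ε1*ε0 = 1 ∨ ε1*ε0 = -1 := by
      rcases hε1 with rfl | rfl <;> rcases hε0 with rfl | rfl <;> norm_num
    have hv : ε2*ε3 = 1 ∨ ε2*ε3 = -1 := by
      rcases hε2 with rfl | rfl <;> rcases hε3 with rfl | rfl <;> norm_num
    have hsepZ : ((bar ℓ (κ j') : ℤ) + (n:ℤ) ≤ (bar ℓ (κ j) : ℤ)) ∨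
        ((bar ℓ (κ j) : ℤ) + (n:ℤ) ≤ (bar ℓ (κ j') : ℤ)) := by
      rcases hsep with h | h
      · exact Or.inl (by exact_mod_cast h)
      · exact Or.inr (by exact_mod_cast h)
    have habs : |(bar ℓ (κ j + (b:ℤ) - (a:ℤ)) : ℤ) - (bar ℓ (κ j' + (b':ℤ) - (a':ℤ)) : ℤ)| ≤ 1 := by
      rw [Int.abs_eq_natAbs]
      exact_mod_cast hδ
    have hd1 := (abs_le.mp habs).1
    have hd2 := (abs_le.mp habs).2
    exact cross_arith ℓ n m hℓ hnℓ hm (bar ℓ (κ j) : ℤ) (bar ℓ (κ j') : ℤ)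
      (bar ℓ (κ j + (b:ℤ) - (a:ℤ)) : ℤ) (bar ℓ (κ j' + (b':ℤ) - (a':ℤ)) : ℤ)
      ((b:ℤ) - (a:ℤ)) ((b':ℤ) - (a':ℤ)) (ε1*ε0) (ε2*ε3) ε1 ε2
      (c1 - c2 - ε1*ε0*c0 + ε2*ε3*c3) hu hv hε1 hε2
      (Int.natCast_nonneg _) (by exact_mod_cast hβle) (Int.natCast_nonneg _)
      (by exact_mod_cast hβ'le)
      h2j.1 h2j.2 h2j'.1 h2j'.2 hsepZ hd1 hd2
      ((a:ℤ) + b) ((a':ℤ) + b') (by positivity) (by positivity) (by omega)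
      (by omega) (by omega) (by omega) (by omega) hE

/-- Corollary 3.3: under (SS1) and (SS2), if `i` is the residue sequence of a standard tableau
and `i_{r+1} = i_r ± 1`, then the sequence with entries `r, r+1` swapped is not the residue
sequence of any standard tableau of shape an `l`-multipartition of `n`. -/
theorem swap_not_residue_sequence (ℓ l n : ℕ) (hℓ : 2 ≤ ℓ) (κ : Fin l → ℤ)
    (h1 : SS1 ℓ l n κ) (h2 : SS2 ℓ l n κ)
    (i : Fin n → ℕ)
    (hi : ∃ (lam : Fin l → YoungDiagram) (T : Fin n → Fin l × ℕ × ℕ),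
      IsMPT l n lam ∧ IsStdM l n lam T ∧ resSeq ℓ l n κ T = i)
    (r : ℕ) (hr : r + 1 < n)
    (hadj : i ⟨r + 1, hr⟩ = i ⟨r, by omega⟩ + 1 ∨ i ⟨r, by omega⟩ = i ⟨r + 1, hr⟩ + 1) :
    ¬ ∃ (lam : Fin l → YoungDiagram) (T : Fin n → Fin l × ℕ × ℕ),
      IsMPT l n lam ∧ IsStdM l n lam T ∧
        resSeq ℓ l n κ T = i ∘ Equiv.swap ⟨r, by omega⟩ ⟨r + 1, hr⟩ := by
  rintro ⟨lamS, S, hmptS, ⟨hSinj, hSsh, hSLS⟩, hresS⟩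
  obtain ⟨lamT, T, hmptT, ⟨hTinj, hTsh, hTLS⟩, hresT⟩ := hi
  have hrn : r < n := by omega
  -- restate hypotheses with uniform Fin proof terms
  have hresS' : ∀ k : Fin n, resSeq ℓ l n κ S k
      = i (Equiv.swap (⟨r, hrn⟩ : Fin n) ⟨r + 1, hr⟩ k) := fun k => congrFun hresS k
  have hadj' : i ⟨r + 1, hr⟩ = i ⟨r, hrn⟩ + 1 ∨ i ⟨r, hrn⟩ = i ⟨r + 1, hr⟩ + 1 := hadj
  -- the two tableaux agree strictly below position r
  have H : ∀ m : ℕ, m ≤ r → ∀ k : Fin n, k.1 < m → T k = S k := by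
    intro m
    induction m with
    | zero => intro _ k hk; exact absurd hk (by omega)
    | succ m ih =>
      intro hm k hk
      rcases Nat.lt_or_ge k.1 m with h | h
      · exact ih (by omega) k h
      · have hmn : m < n := by omega
        have hkm : k = ⟨m, hmn⟩ := Fin.ext (show k.1 = m by omega)
        subst hkm
        refine core ℓ l n hℓ κ h1 h2 T S hTinj hTLS hSinj hSLS m (by omega) hmn
          (ih (by omega)) ?_
        have e1 : resSeq ℓ l n κ T ⟨m, hmn⟩ = i ⟨m, hmn⟩ := congrFun hresT _
        have e2 : resSeq ℓ l n κ S ⟨m, hmn⟩ = i ⟨m, hmn⟩ := by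
          rw [hresS' ⟨m, hmn⟩, Equiv.swap_apply_of_ne_of_ne
            (Fin.ne_of_val_ne (show m ≠ r by omega))
            (Fin.ne_of_val_ne (show m ≠ r + 1 by omega))]
        rw [e1, e2]
        simp
  have eT : resSeq ℓ l n κ T ⟨r, hrn⟩ = i ⟨r, hrn⟩ := congrFun hresT _
  have eS : resSeq ℓ l n κ S ⟨r, hrn⟩ = i ⟨r + 1, hr⟩ := by
    rw [hresS' ⟨r, hrn⟩, Equiv.swap_apply_left]
  have hTS : T ⟨r, hrn⟩ = S ⟨r, hrn⟩ := by
    refine core ℓ l n hℓ κ h1 h2 T S hTinj hTLS hSinj hSLS r (by omega) hrn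
      (H r le_rfl) ?_
    rw [eT, eS]
    omega
  have hres_eq : resSeq ℓ l n κ T ⟨r, hrn⟩ = resSeq ℓ l n κ S ⟨r, hrn⟩ := by
    simp [resSeq, hTS]
  rw [eT, eS] at hres_eq
  omega
end

section
/- Under conditions (SS1) and (SS2) in type C, a residue sequence of a standard tableau cannot contain three consecutive entries of the form (i, i±1, i) with the middle entry not equal to 0 or ℓ; i.e., if i = i^t for a standard tableau t and i_r = i_{r+2} = i_{r+1} ± 1, then i_{r+1} ∈ {0, ℓ} (equivalently the triple is (1,0,1) or (ℓ−1,ℓ,ℓ−1)). -/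
/-! ### Auxiliary lemmas about the folding map `bar` -/

lemma bar_spec (ℓ : ℕ) (hℓ : 0 < ℓ) (m : ℤ) :
    ((bar ℓ m : ℤ) = m % (2*ℓ) ∨ (bar ℓ m : ℤ) = 2*ℓ - m % (2*ℓ)) ∧
    (bar ℓ m : ℤ) ≤ m % (2*ℓ) ∧ (bar ℓ m : ℤ) ≤ 2*ℓ - m % (2*ℓ) := by
  have h0 : (0:ℤ) < 2*ℓ := by positivity
  have h1 : 0 ≤ m % (2*(ℓ:ℤ)) := Int.emod_nonneg m (by omega)
  have h2 : m % (2*(ℓ:ℤ)) < 2*ℓ := Int.emod_lt_of_pos m h0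
  unfold bar
  have h3 : ((m % (2*(ℓ:ℤ))).toNat : ℤ) = m % (2*ℓ) := Int.toNat_of_nonneg h1
  push_cast
  omega

lemma bar_le_s10 (ℓ : ℕ) (hℓ : 0 < ℓ) (m : ℤ) : bar ℓ m ≤ ℓ := by
  have := bar_spec ℓ hℓ m
  omega

lemma bar_eq_zero (ℓ : ℕ) (_hℓ : 0 < ℓ) (m : ℤ) (h : (2*(ℓ:ℤ)) ∣ m) : bar ℓ m = 0 := by
  have : m % (2*(ℓ:ℤ)) = 0 := Int.emod_eq_zero_of_dvd h
  unfold bar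
  simp [this]

lemma bar_eq_ell (ℓ : ℕ) (hℓ : 0 < ℓ) (m : ℤ) (h : (2*(ℓ:ℤ)) ∣ (m - ℓ)) : bar ℓ m = ℓ := by
  have hmod : m % (2*(ℓ:ℤ)) = ℓ := by
    obtain ⟨c, hc⟩ := h
    have : m = ℓ + 2*ℓ*c := by linarith
    rw [this, Int.add_mul_emod_self_left, Int.emod_eq_of_lt (by positivity) (by omega)]
  have := bar_spec ℓ hℓ m
  omega

lemma bar_half (ℓ : ℕ) (hℓ : 0 < ℓ) (w : ℤ) (h : (2*(ℓ:ℤ)) ∣ 2*w) :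
    bar ℓ w = 0 ∨ bar ℓ w = ℓ := by
  obtain ⟨c, hc⟩ := h
  rcases Int.even_or_odd c with ⟨d, hd⟩ | ⟨d, hd⟩
  · left
    apply bar_eq_zero ℓ hℓ
    refine ⟨d, mul_left_cancel₀ (two_ne_zero) ?_⟩
    rw [hc, hd]; ring
  · right
    apply bar_eq_ell ℓ hℓ
    refine ⟨d, mul_left_cancel₀ (two_ne_zero) ?_⟩
    rw [hd] at hc
    linear_combination hc

lemma bar_eq_cases (ℓ : ℕ) (hℓ : 0 < ℓ) (m m' : ℤ) (h : bar ℓ m = bar ℓ m') :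
    (2*(ℓ:ℤ)) ∣ (m - m') ∨ (2*(ℓ:ℤ)) ∣ (m + m') := by
  have s1 := bar_spec ℓ hℓ m
  have s2 := bar_spec ℓ hℓ m'
  have h1 : 0 ≤ m % (2*(ℓ:ℤ)) := Int.emod_nonneg m (by positivity)
  have h2 : 0 ≤ m' % (2*(ℓ:ℤ)) := Int.emod_nonneg m' (by positivity)
  have hd1 : (2*(ℓ:ℤ)) ∣ (m - m % (2*ℓ)) := Int.dvd_self_sub_of_emod_eq rfl
  have hd2 : (2*(ℓ:ℤ)) ∣ (m' - m' % (2*ℓ)) := Int.dvd_self_sub_of_emod_eq rfl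
  have hcase : m % (2*(ℓ:ℤ)) = m' % (2*ℓ) ∨ m % (2*(ℓ:ℤ)) + m' % (2*ℓ) = 2*ℓ ∨
      (m % (2*(ℓ:ℤ)) = 0 ∧ m' % (2*(ℓ:ℤ)) = 0) := by omega
  rcases hcase with hc | hc | hc
  · left
    have : m - m' = (m - m % (2*ℓ)) - (m' - m' % (2*ℓ)) := by omega
    rw [this]; exact dvd_sub hd1 hd2
  · right
    have : m + m' = (m - m % (2*ℓ)) + (m' - m' % (2*ℓ)) + 2*ℓ := by omega
    rw [this]; exact dvd_add (dvd_add hd1 hd2) (dvd_refl _)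
  · right
    have : m + m' = (m - m % (2*ℓ)) + (m' - m' % (2*ℓ)) := by omega
    rw [this]; exact dvd_add hd1 hd2

lemma bar_range (ℓ : ℕ) (hℓ : 0 < ℓ) (N : ℤ) (κ d : ℤ) (hd : |d| ≤ N)
    (h2a : N ≤ 2 * (bar ℓ κ : ℤ)) (h2b : 2 * (bar ℓ κ : ℤ) ≤ 2*ℓ - N) :
    (bar ℓ κ : ℤ) - |d| ≤ (bar ℓ (κ + d) : ℤ) ∧ (bar ℓ (κ + d) : ℤ) ≤ (bar ℓ κ : ℤ) + |d| := by
  have s1 := bar_spec ℓ hℓ κ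
  have s2 := bar_spec ℓ hℓ (κ + d)
  have h1 : 0 ≤ κ % (2*(ℓ:ℤ)) := Int.emod_nonneg κ (by positivity)
  have h1' : κ % (2*(ℓ:ℤ)) < 2*ℓ := Int.emod_lt_of_pos κ (by positivity)
  have h2 : 0 ≤ (κ+d) % (2*(ℓ:ℤ)) := Int.emod_nonneg _ (by positivity)
  have h2' : (κ+d) % (2*(ℓ:ℤ)) < 2*ℓ := Int.emod_lt_of_pos _ (by positivity)
  have e1 : κ = 2*ℓ * (κ / (2*ℓ)) + κ % (2*ℓ) := (Int.mul_ediv_add_emod _ _).symm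
  have e2 : κ + d = 2*ℓ * ((κ+d) / (2*ℓ)) + (κ+d) % (2*ℓ) := (Int.mul_ediv_add_emod _ _).symm
  set s : ℤ := (κ+d) / (2*ℓ) - κ / (2*ℓ) with hs
  have key : (κ+d) % (2*(ℓ:ℤ)) = κ % (2*ℓ) + d - 2*ℓ*s := by
    have : 2*(ℓ:ℤ)*s = 2*ℓ * ((κ+d) / (2*ℓ)) - 2*ℓ*(κ / (2*ℓ)) := by rw [hs]; ring
    omega
  have hN : N ≤ ℓ := by omega
  have hsb : s = -1 ∨ s = 0 ∨ s = 1 := by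
    rcases abs_cases d with ⟨c1, c2⟩ | ⟨c1, c2⟩ <;>
    · rcases le_or_gt s (-2) with hs2 | hs2
      · exfalso
        have : 2*(ℓ:ℤ)*s ≤ 2*ℓ*(-2) :=
          mul_le_mul_of_nonneg_left hs2 (by positivity)
        omega
      · rcases le_or_gt 2 s with hs3 | hs3
        · exfalso
          have : 2*(ℓ:ℤ)*2 ≤ 2*ℓ*s :=
            mul_le_mul_of_nonneg_left hs3 (by positivity)
          omega
        · omega
  rcases abs_cases d with ⟨c1, c2⟩ | ⟨c1, c2⟩ <;> rcases hsb with h | h | h <;>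
    rw [h] at key <;> omega

/-! ### Counting boxes by their entries -/

lemma card_le_of_entries {α : Type*} [DecidableEq α] {n : ℕ} (T : Fin n → α)
    (hinj : Function.Injective T) (S : Finset α) (m : ℕ)
    (hS : ∀ P ∈ S, ∃ k : Fin n, k.val < m ∧ T k = P) : S.card ≤ m := by
  classical
  have hle := Finset.card_le_card_of_injOn
    (f := fun P => if h : ∃ k : Fin n, k.val < m ∧ T k = P then h.choose.val else 0)
    (s := S) (t := Finset.range m) ?_ ?_
  · simpa using hle
  · intro P hP
    simp only [Finset.mem_range]
    rw [dif_pos (hS P hP)]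
    exact Finset.mem_coe.mpr (Finset.mem_range.mpr (hS P hP).choose_spec.1)
  · intro P hP Q hQ hf
    simp only at hf
    rw [dif_pos (hS P hP), dif_pos (hS Q hQ)] at hf
    have h1 := (hS P hP).choose_spec.2
    have h2 := (hS Q hQ).choose_spec.2
    have hch : (hS P hP).choose = (hS Q hQ).choose := Fin.ext hf
    have hTT := congrArg T hch
    rw [h1, h2] at hTT
    exact hTT

/-- The rectangle of boxes weakly northwest of `(p-1, q-1)`. -/
def Rect (p q : ℕ) : Finset (ℕ × ℕ) := Finset.range p ×ˢ Finset.range q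

lemma mem_Rect {p q : ℕ} {P : ℕ × ℕ} : P ∈ Rect p q ↔ P.1 < p ∧ P.2 < q := by
  simp [Rect, Finset.mem_product]

lemma card_Rect (p q : ℕ) : (Rect p q).card = p * q := by
  simp [Rect]

lemma Rect_inter (p q p' q' : ℕ) :
    Rect p q ∩ Rect p' q' = Rect (min p p') (min q q') := by
  ext ⟨u, v⟩
  simp [Rect, Finset.mem_product]
  omega

lemma Rect_union_card (p q p' q' : ℕ) :
    (Rect p q ∪ Rect p' q').card + (min p p') * (min q q') = p * q + p' * q' := by
  have := Finset.card_union_add_card_inter (Rect p q) (Rect p' q')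
  rw [Rect_inter, card_Rect, card_Rect, card_Rect] at this
  exact this

lemma incomp_arith (x1 y1 x2 y2 R N : ℤ) (h01 : 0 ≤ x1) (h02 : 0 ≤ y2)
    (hx : x1 + 1 ≤ x2) (hy : y2 + 1 ≤ y1)
    (hprod : (x1+1)*(y1+1) + (x2+1)*(y2+1) ≤ (R+3) + (x1+1)*(y2+1))
    (hrn : R + 3 ≤ N)
    (hD : (N - 1 ≤ (y1+y2) - (x1+x2)) ∨ ((y1+y2) - (x1+x2) ≤ 1 - N)) : False := by
  have t1 : (0:ℤ) ≤ x1 * (y1+1) := by nlinarith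
  have t2 : (0:ℤ) ≤ (y2+1) * (x2 - x1 - 1) := by nlinarith
  have t3 : (0:ℤ) ≤ (x1+1) * (y1 - 1) := by nlinarith
  have t4 : (0:ℤ) ≤ y2 * (x2 - x1) := by nlinarith
  rcases hD with h | h <;> nlinarith [t1, t2, t3, t4]

set_option maxHeartbeats 1000000 in
/-- Under (SS1) and (SS2), a residue sequence of a standard tableau cannot contain three
consecutive entries `(i, i±1, i)` unless the middle entry is `0` or `ℓ`. -/
theorem no_bad_triple (ℓ l n : ℕ) (hℓ : 2 ≤ ℓ) (κ : Fin l → ℤ)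
    (h1 : SS1 ℓ l n κ) (h2 : SS2 ℓ l n κ)
    (lam : Fin l → YoungDiagram) (hlam : IsMPT l n lam)
    (T : Fin n → Fin l × ℕ × ℕ) (hT : IsStdM l n lam T)
    (i : Fin n → ℕ) (hi : i = resSeq ℓ l n κ T)
    (r : ℕ) (hr : r + 2 < n)
    (heq : i ⟨r, by omega⟩ = i ⟨r + 2, hr⟩)
    (hadj : i ⟨r, by omega⟩ = i ⟨r + 1, by omega⟩ + 1 ∨
      i ⟨r + 1, by omega⟩ = i ⟨r, by omega⟩ + 1) :
    i ⟨r + 1, by omega⟩ = 0 ∨ i ⟨r + 1, by omega⟩ = ℓ := by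
  classical
  subst hi
  obtain ⟨hinj, hsurj, hlow⟩ := hT
  have hℓ0 : 0 < ℓ := by omega
  have prA : r < n := by omega
  have prB : r + 1 < n := by omega
  have prC : r + 2 < n := hr
  rcases hTA : T ⟨r, prA⟩ with ⟨jA, xA, yA⟩
  rcases hTC : T ⟨r+2, prC⟩ with ⟨jC, xC, yC⟩
  -- entry order lemmas
  have entry_le : ∀ (k : Fin n) (jj : Fin l) (P Q : ℕ × ℕ), T k = (jj, Q) → P ≤ Q →
      ∃ k' : Fin n, k'.val ≤ k.val ∧ T k' = (jj, P) := by
    intro k jj P Q hk hPQ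
    obtain ⟨k', hk'1, hk'2⟩ := hlow (k.val + 1) jj hPQ ⟨k, by omega, hk⟩
    exact ⟨k', by omega, hk'2⟩
  have entry_lt : ∀ (k k' : Fin n) (jj : Fin l) (P Q : ℕ × ℕ), T k = (jj, P) →
      T k' = (jj, Q) → P ≤ Q → P ≠ Q → k.val < k'.val := by
    intro k k' jj P Q hk hk' hle hne
    obtain ⟨k'', h1, h2⟩ := entry_le k' jj P Q hk' hle
    have hkk : k'' = k := hinj (h2.trans hk.symm)
    subst hkk
    rcases eq_or_lt_of_le h1 with heqv | hlt
    · exfalso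
      have hkeq : k'' = k' := Fin.ext heqv
      subst hkeq
      rw [hk] at hk'
      exact hne (Prod.ext_iff.mp hk').2
    · exact hlt
  -- per-component counting
  have comp_card : ∀ (jj : Fin l) (S : Finset (ℕ × ℕ)) (m : ℕ),
      (∀ P ∈ S, ∃ k : Fin n, k.val < m ∧ T k = (jj, P)) → S.card ≤ m := by
    intro jj S m hS
    have hi2 : Function.Injective (fun P : ℕ × ℕ => (jj, P)) := by
      intro a b h
      exact (Prod.ext_iff.mp h).2
    have himage := card_le_of_entries T hinj (S.image (fun P => (jj, P))) m ?_
    · rwa [Finset.card_image_of_injective _ hi2] at himage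
    · intro P hP
      simp only [Finset.mem_image] at hP
      obtain ⟨Q, hQ, rfl⟩ := hP
      exact hS Q hQ
  -- rectangle bounds
  have hA_rect : (xA+1) * (yA+1) ≤ r + 1 := by
    rw [← card_Rect (xA+1) (yA+1)]
    apply comp_card jA (Rect (xA+1) (yA+1)) (r+1)
    rintro ⟨u, v⟩ hP
    rw [mem_Rect] at hP
    obtain ⟨k', hk1, hk2⟩ := entry_le ⟨r, prA⟩ jA (u, v) (xA, yA) hTA
      (Prod.mk_le_mk.mpr ⟨by omega, by omega⟩)
    exact ⟨k', by simp at hk1 ⊢; omega, hk2⟩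
  have hC_rect : (xC+1) * (yC+1) ≤ r + 3 := by
    rw [← card_Rect (xC+1) (yC+1)]
    apply comp_card jC (Rect (xC+1) (yC+1)) (r+3)
    rintro ⟨u, v⟩ hP
    rw [mem_Rect] at hP
    obtain ⟨k', hk1, hk2⟩ := entry_le ⟨r+2, prC⟩ jC (u, v) (xC, yC) hTC
      (Prod.mk_le_mk.mpr ⟨by omega, by omega⟩)
    exact ⟨k', by simp at hk1 ⊢; omega, hk2⟩
  have hxyA : xA + yA ≤ r := by nlinarith
  have hxyC : xC + yC ≤ r + 2 := by nlinarith
  -- residue values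
  have heqA : resSeq ℓ l n κ T ⟨r, prA⟩ = bar ℓ (κ jA + ((yA:ℤ) - (xA:ℤ))) := by
    simp only [resSeq, hTA]
    congr 1
    ring
  have heqC : resSeq ℓ l n κ T ⟨r+2, prC⟩ = bar ℓ (κ jC + ((yC:ℤ) - (xC:ℤ))) := by
    simp only [resSeq, hTC]
    congr 1
    ring
  have heq2 : bar ℓ (κ jA + ((yA:ℤ) - (xA:ℤ))) = bar ℓ (κ jC + ((yC:ℤ) - (xC:ℤ))) := by
    rw [← heqA, ← heqC]
    exact heq
  have hnℓ : (n:ℤ) - 1 ≤ ℓ := by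
    have := h2 jA
    omega
  -- |d| ≤ x+y facts
  have habsA : |(yA:ℤ) - (xA:ℤ)| ≤ (xA:ℤ) + yA := by
    rcases abs_cases ((yA:ℤ) - (xA:ℤ)) with ⟨h, _⟩ | ⟨h, _⟩ <;> omega
  have habsC : |(yC:ℤ) - (xC:ℤ)| ≤ (xC:ℤ) + yC := by
    rcases abs_cases ((yC:ℤ) - (xC:ℤ)) with ⟨h, _⟩ | ⟨h, _⟩ <;> omega
  -- Step 1: same component
  have hjAC : jA = jC := by
    by_contra hne
    -- disjoint counting
    have hsum : (xA+1) * (yA+1) + (xC+1) * (yC+1) ≤ r + 3 := by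
      have hiA : Function.Injective (fun P : ℕ × ℕ => (jA, P)) := fun a b h => (Prod.ext_iff.mp h).2
      have hiC : Function.Injective (fun P : ℕ × ℕ => (jC, P)) := fun a b h => (Prod.ext_iff.mp h).2
      have hdisj : Disjoint ((Rect (xA+1) (yA+1)).image (fun P => (jA, P)))
          ((Rect (xC+1) (yC+1)).image (fun P => (jC, P))) := by
        simp only [Finset.disjoint_left, Finset.mem_image]
        rintro a ⟨P, hP, rfl⟩ ⟨Q, hQ, hQa⟩
        exact hne ((Prod.ext_iff.mp hQa).1).symm
      have hcard := card_le_of_entries T hinj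
        (((Rect (xA+1) (yA+1)).image (fun P => (jA, P))) ∪
          ((Rect (xC+1) (yC+1)).image (fun P => (jC, P)))) (r+3) ?_
      · rwa [Finset.card_union_of_disjoint hdisj, Finset.card_image_of_injective _ hiA,
          Finset.card_image_of_injective _ hiC, card_Rect, card_Rect] at hcard
      · intro a ha
        rcases Finset.mem_union.mp ha with h | h <;> simp only [Finset.mem_image] at h <;>
          obtain ⟨⟨u, v⟩, hP, rfl⟩ := h
        · rw [mem_Rect] at hP
          obtain ⟨k', hk1, hk2⟩ := entry_le ⟨r, prA⟩ jA (u, v) (xA, yA) hTA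
            (Prod.mk_le_mk.mpr ⟨by omega, by omega⟩)
          exact ⟨k', by simp at hk1 ⊢; omega, hk2⟩
        · rw [mem_Rect] at hP
          obtain ⟨k', hk1, hk2⟩ := entry_le ⟨r+2, prC⟩ jC (u, v) (xC, yC) hTC
            (Prod.mk_le_mk.mpr ⟨by omega, by omega⟩)
          exact ⟨k', by simp at hk1 ⊢; omega, hk2⟩
    have hxysum : (xA + yA) + (xC + yC) ≤ r + 1 := by nlinarith
    -- residue windows
    have hrA := bar_range ℓ hℓ0 ((n:ℤ)-1) (κ jA) ((yA:ℤ) - xA)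
      (by omega) (h2 jA).1 (h2 jA).2
    have hrC := bar_range ℓ hℓ0 ((n:ℤ)-1) (κ jC) ((yC:ℤ) - xC)
      (by omega) (h2 jC).1 (h2 jC).2
    have hdist : (bar ℓ (κ jA) : ℤ) ≤ bar ℓ (κ jC) + (r+1) ∧
        (bar ℓ (κ jC) : ℤ) ≤ bar ℓ (κ jA) + (r+1) := by
      rw [heq2] at hrA
      constructor <;> omega
    have hbAle := bar_le_s10 ℓ hℓ0 (κ jA)
    have hbCle := bar_le_s10 ℓ hℓ0 (κ jC)
    apply hne
    apply h1 (min (bar ℓ (κ jA)) (bar ℓ (κ jC))) (by omega) jA jC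
    · refine ⟨bar ℓ (κ jA) - min (bar ℓ (κ jA)) (bar ℓ (κ jC)), by omega, ?_⟩
      rw [Nat.mod_eq_of_lt (by omega)]
      omega
    · refine ⟨bar ℓ (κ jC) - min (bar ℓ (κ jA)) (bar ℓ (κ jC)), by omega, ?_⟩
      rw [Nat.mod_eq_of_lt (by omega)]
      omega
  subst hjAC
  -- A and C are distinct boxes
  have hACne : (xA, yA) ≠ (xC, yC) := by
    intro h
    have hTT : T ⟨r, prA⟩ = T ⟨r+2, prC⟩ := by rw [hTA, hTC, h]
    have := congrArg Fin.val (hinj hTT)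
    simp at this
  have hdvd := bar_eq_cases ℓ hℓ0 _ _ heq2
  rcases hdvd with ⟨c, hc⟩ | ⟨c, hc⟩
  · -- Case 1: same diagonal
    exfalso
    have hΔ : ((yA:ℤ) - xA) - ((yC:ℤ) - xC) = 2*(ℓ:ℤ)*c := by linear_combination hc
    have hc0 : c = 0 := by
      by_contra h
      rcases lt_or_gt_of_ne h with h | h
      · have hmm : 2*(ℓ:ℤ)*c ≤ 2*(ℓ:ℤ)*(-1) :=
          mul_le_mul_of_nonneg_left (by omega) (by positivity)
        linarith
      · have hmm : 2*(ℓ:ℤ)*1 ≤ 2*(ℓ:ℤ)*c :=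
          mul_le_mul_of_nonneg_left (by omega) (by positivity)
        linarith
    rw [hc0, mul_zero] at hΔ
    have hdiag : yA + xC = yC + xA := by omega
    rcases lt_trichotomy xA xC with hx | hx | hx
    · -- C strictly southeast of A on the same diagonal
      have hyAC : yA < yC := by omega
      obtain ⟨k1, hk1le, hk1⟩ := entry_le ⟨r+2, prC⟩ jA (xC-1, yC) (xC, yC) hTC
        (Prod.mk_le_mk.mpr ⟨by omega, le_refl _⟩)
      obtain ⟨k2, hk2le, hk2⟩ := entry_le ⟨r+2, prC⟩ jA (xC, yC-1) (xC, yC) hTC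
        (Prod.mk_le_mk.mpr ⟨le_refl _, by omega⟩)
      have hk1le' : k1.val ≤ r + 2 := hk1le
      have hk2le' : k2.val ≤ r + 2 := hk2le
      have h1lt : r < k1.val := entry_lt ⟨r, prA⟩ k1 jA (xA, yA) (xC-1, yC) hTA hk1
        (Prod.mk_le_mk.mpr ⟨by omega, by omega⟩)
        (by intro hh; simp only [Prod.mk.injEq] at hh; omega)
      have h2lt : r < k2.val := entry_lt ⟨r, prA⟩ k2 jA (xA, yA) (xC, yC-1) hTA hk2
        (Prod.mk_le_mk.mpr ⟨by omega, by omega⟩)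
        (by intro hh; simp only [Prod.mk.injEq] at hh; omega)
      have hk1ne : k1.val ≠ r+2 := by
        intro hv
        have hk1C : k1 = ⟨r+2, prC⟩ := Fin.ext hv
        rw [hk1C, hTC] at hk1
        simp only [Prod.mk.injEq] at hk1
        omega
      have hk2ne : k2.val ≠ r+2 := by
        intro hv
        have hk2C : k2 = ⟨r+2, prC⟩ := Fin.ext hv
        rw [hk2C, hTC] at hk2
        simp only [Prod.mk.injEq] at hk2
        omega
      have hk12 : k1 = k2 := Fin.ext (by omega)
      rw [hk12, hk2] at hk1
      simp only [Prod.mk.injEq] at hk1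
      omega
    · exact hACne (by rw [hx, show yA = yC from by omega])
    · -- C strictly northwest of A : entry of C would be less than entry of A
      have hyCA : yC < yA := by omega
      have hlt : r + 2 < r := entry_lt ⟨r+2, prC⟩ ⟨r, prA⟩ jA (xC, yC) (xA, yA) hTC hTA
        (Prod.mk_le_mk.mpr ⟨by omega, by omega⟩)
        (by intro hh; simp only [Prod.mk.injEq] at hh; omega)
      omega
  · -- Case 2: folded diagonals
    obtain ⟨D, hDdef⟩ : ∃ D : ℤ, D = ((yA:ℤ) + (yC:ℤ)) - ((xA:ℤ) + (xC:ℤ)) := ⟨_, rfl⟩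
    have hfold : (2*(ℓ:ℤ)) ∣ (2*(κ jA) + D) := ⟨c, by rw [hDdef]; linear_combination hc⟩
    have hDub : D ≤ 2*(r:ℤ) + 2 := by rw [hDdef]; push_cast; omega
    have hDlb : -(2*(r:ℤ) + 2) ≤ D := by rw [hDdef]; push_cast; omega
    have hqe := Int.mul_ediv_add_emod (κ jA) (2*(ℓ:ℤ))
    have he0 : 0 ≤ κ jA % (2*(ℓ:ℤ)) := Int.emod_nonneg _ (by positivity)
    have he1 : κ jA % (2*(ℓ:ℤ)) < 2*(ℓ:ℤ) := Int.emod_lt_of_pos _ (by positivity)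
    obtain ⟨tq, hDform⟩ : ∃ tq : ℤ, D = 2*(ℓ:ℤ)*tq - 2*(κ jA % (2*(ℓ:ℤ))) :=
      ⟨c - 2*(κ jA / (2*(ℓ:ℤ))), by rw [hDdef]; linear_combination hc + 2*hqe⟩
    have hrn : (r:ℤ) + 3 ≤ n := by omega
    have htub : tq ≤ 2 := by
      by_contra h
      have hmm : 2*(ℓ:ℤ)*3 ≤ 2*(ℓ:ℤ)*tq :=
        mul_le_mul_of_nonneg_left (by omega) (by positivity)
      linarith
    have htlb : 0 ≤ tq := by
      by_contra h
      have hmm : 2*(ℓ:ℤ)*tq ≤ 2*(ℓ:ℤ)*(-1) :=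
        mul_le_mul_of_nonneg_left (by omega) (by positivity)
      linarith
    have hDeven : (2:ℤ) ∣ D := ⟨(ℓ:ℤ)*tq - κ jA % (2*(ℓ:ℤ)), by linear_combination hDform⟩
    have hbspec := bar_spec ℓ hℓ0 (κ jA)
    have hble : bar ℓ (κ jA) ≤ ℓ := bar_le_s10 ℓ hℓ0 (κ jA)
    have h2A := h2 jA
    have hbleZ : (bar ℓ (κ jA) : ℤ) ≤ (ℓ:ℤ) := by exact_mod_cast hble
    have hDbig : ((n:ℤ) - 1 ≤ D) ∨ (D ≤ 1 - (n:ℤ)) := by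
      have htr : tq = 0 ∨ tq = 1 ∨ tq = 2 := by omega
      rcases hbspec.1 with hb | hb <;> rcases htr with rfl | rfl | rfl <;>
        first
          | (left; linarith)
          | (right; linarith)
    -- incomparable configuration is impossible
    have key_incomp : ∀ x1 y1 x2 y2 : ℕ, x1 < x2 → y2 < y1 →
        (∀ P ∈ Rect (x1+1) (y1+1) ∪ Rect (x2+1) (y2+1),
          ∃ k : Fin n, k.val < r + 3 ∧ T k = (jA, P)) →
        ((y1:ℤ) + (y2:ℤ)) - ((x1:ℤ) + (x2:ℤ)) = D → False := by
      intro x1 y1 x2 y2 hx12 hy21 hmem hE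
      have hcard := comp_card jA _ (r+3) hmem
      have huni := Rect_union_card (x1+1) (y1+1) (x2+1) (y2+1)
      rw [min_eq_left (by omega), min_eq_right (by omega)] at huni
      have hprod : (x1+1) * (y1+1) + (x2+1) * (y2+1) ≤ (r+3) + (x1+1) * (y2+1) := by
        omega
      have hprodZ : ((x1:ℤ)+1) * ((y1:ℤ)+1) + ((x2:ℤ)+1) * ((y2:ℤ)+1)
          ≤ ((r:ℤ)+3) + ((x1:ℤ)+1) * ((y2:ℤ)+1) := by exact_mod_cast hprod
      apply incomp_arith (x1:ℤ) (y1:ℤ) (x2:ℤ) (y2:ℤ) (r:ℤ) (n:ℤ)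
        (by positivity) (by positivity)
        (by exact_mod_cast hx12) (by exact_mod_cast hy21) hprodZ hrn
      rw [hE]
      exact hDbig
    -- small helper to produce the membership condition
    have hmemA : ∀ P : ℕ × ℕ, P.1 < xA + 1 → P.2 < yA + 1 →
        ∃ k : Fin n, k.val < r + 3 ∧ T k = (jA, P) := by
      rintro ⟨u, v⟩ hu hv
      obtain ⟨k', hk1, hk2⟩ := entry_le ⟨r, prA⟩ jA (u, v) (xA, yA) hTA
        (Prod.mk_le_mk.mpr ⟨by omega, by omega⟩)
      have : k'.val ≤ r := hk1
      exact ⟨k', by omega, hk2⟩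
    have hmemC : ∀ P : ℕ × ℕ, P.1 < xC + 1 → P.2 < yC + 1 →
        ∃ k : Fin n, k.val < r + 3 ∧ T k = (jA, P) := by
      rintro ⟨u, v⟩ hu hv
      obtain ⟨k', hk1, hk2⟩ := entry_le ⟨r+2, prC⟩ jA (u, v) (xC, yC) hTC
        (Prod.mk_le_mk.mpr ⟨by omega, by omega⟩)
      have : k'.val ≤ r + 2 := hk1
      exact ⟨k', by omega, hk2⟩
    rcases le_or_gt xA xC with hx | hx <;> rcases le_or_gt yA yC with hy | hy
    · -- A ≤ C : the interesting case
      rcases lt_trichotomy D 0 with hD0 | hD0 | hD0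
      · -- D < 0 : both boxes in column 0
        have hyC0 : yC = 0 := by
          by_contra hyC
          have hmul : 2*(yC+1) ≤ (xC+1)*(yC+1) := by
            by_contra hcon
            push_neg at hcon
            nlinarith
          rcases hDbig with hD | hD
          · omega
          · -- -D ≤ 2 xC, but also 2 xC + small ≤ r + 3
            have hmul2 : (xC+1)*2 ≤ (xC+1)*(yC+1) := Nat.mul_le_mul_left _ (by omega)
            omega
        have hyA0 : yA = 0 := by omega
        subst hyA0
        subst hyC0
        have hxAC : xA < xC := by
          rcases Nat.lt_or_ge xA xC with h | h
          · exact h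
          · exfalso
            exact hACne (by rw [show xA = xC from by omega])
        obtain ⟨w, hw⟩ := hDeven
        have hstep : ∀ u : ℕ, xA < u → u < xC →
            ∃ k : Fin n, k.val = r+1 ∧ T k = (jA, (u, 0)) := by
          intro u hu1 hu2
          obtain ⟨k1, hk1le, hk1⟩ := entry_le ⟨r+2, prC⟩ jA (u, 0) (xC, 0) hTC
            (Prod.mk_le_mk.mpr ⟨by omega, le_refl _⟩)
          have hk1le' : k1.val ≤ r + 2 := hk1le
          have hgt : r < k1.val := entry_lt ⟨r, prA⟩ k1 jA (xA, 0) (u, 0) hTA hk1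
            (Prod.mk_le_mk.mpr ⟨by omega, le_refl _⟩)
            (by intro hh; simp only [Prod.mk.injEq] at hh; omega)
          have hne2 : k1.val ≠ r+2 := by
            intro hv
            have hk1C : k1 = ⟨r+2, prC⟩ := Fin.ext hv
            rw [hk1C, hTC] at hk1
            simp only [Prod.mk.injEq] at hk1
            omega
          exact ⟨k1, by omega, hk1⟩
        have hxC2 : xC = xA + 2 := by
          by_contra hxx
          rcases Nat.lt_or_ge xC (xA + 2) with h3 | h3
          · -- xC = xA + 1 : parity contradiction
            have : xC = xA + 1 := by omega
            subst this
            omega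
          · have h4 : xA + 3 ≤ xC := by omega
            obtain ⟨k1, hv1, hk1⟩ := hstep (xA+1) (by omega) (by omega)
            obtain ⟨k2, hv2, hk2⟩ := hstep (xA+2) (by omega) (by omega)
            have hk12 : k1 = k2 := Fin.ext (by rw [hv1, hv2])
            rw [hk12, hk2] at hk1
            simp only [Prod.mk.injEq] at hk1
            omega
        obtain ⟨kB, hvB, hkB⟩ := hstep (xA+1) (by omega) (by omega)
        have hkBB : kB = ⟨r+1, prB⟩ := Fin.ext hvB
        rw [hkBB] at hkB
        show resSeq ℓ l n κ T ⟨r+1, prB⟩ = 0 ∨ resSeq ℓ l n κ T ⟨r+1, prB⟩ = ℓ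
        have heqB : resSeq ℓ l n κ T ⟨r+1, prB⟩ =
            bar ℓ (κ jA + ((0:ℤ) - ((xA:ℤ)+1))) := by
          simp only [resSeq, hkB]
          congr 1
          push_cast
          ring
        rw [heqB]
        apply bar_half ℓ hℓ0
        have harg : 2*(κ jA + ((0:ℤ) - ((xA:ℤ)+1))) = 2*(κ jA) + D := by
          rw [hDdef]
          have : (xC:ℤ) = (xA:ℤ) + 2 := by exact_mod_cast hxC2
          rw [this]
          push_cast
          ring
        rw [harg]
        exact hfold
      · -- D = 0 impossible
        exfalso
        rcases hDbig with hD | hD <;> omega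
      · -- D > 0 : both boxes in row 0
        have hxC0 : xC = 0 := by
          by_contra hxCne
          have hmul2 : 2*(yC+1) ≤ (xC+1)*(yC+1) :=
            Nat.mul_le_mul_right _ (by omega)
          rcases hDbig with hD | hD
          · omega
          · omega
        have hxA0 : xA = 0 := by omega
        subst hxA0
        subst hxC0
        have hyAC : yA < yC := by
          rcases Nat.lt_or_ge yA yC with h | h
          · exact h
          · exfalso
            exact hACne (by rw [show yA = yC from by omega])
        obtain ⟨w, hw⟩ := hDeven
        have hstep : ∀ v : ℕ, yA < v → v < yC →
            ∃ k : Fin n, k.val = r+1 ∧ T k = (jA, (0, v)) := by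
          intro v hv1 hv2
          obtain ⟨k1, hk1le, hk1⟩ := entry_le ⟨r+2, prC⟩ jA (0, v) (0, yC) hTC
            (Prod.mk_le_mk.mpr ⟨le_refl _, by omega⟩)
          have hk1le' : k1.val ≤ r + 2 := hk1le
          have hgt : r < k1.val := entry_lt ⟨r, prA⟩ k1 jA (0, yA) (0, v) hTA hk1
            (Prod.mk_le_mk.mpr ⟨le_refl _, by omega⟩)
            (by intro hh; simp only [Prod.mk.injEq] at hh; omega)
          have hne2 : k1.val ≠ r+2 := by
            intro hv
            have hk1C : k1 = ⟨r+2, prC⟩ := Fin.ext hv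
            rw [hk1C, hTC] at hk1
            simp only [Prod.mk.injEq] at hk1
            omega
          exact ⟨k1, by omega, hk1⟩
        have hyC2 : yC = yA + 2 := by
          by_contra hyy
          rcases Nat.lt_or_ge yC (yA + 2) with h3 | h3
          · have : yC = yA + 1 := by omega
            subst this
            omega
          · have h4 : yA + 3 ≤ yC := by omega
            obtain ⟨k1, hv1, hk1⟩ := hstep (yA+1) (by omega) (by omega)
            obtain ⟨k2, hv2, hk2⟩ := hstep (yA+2) (by omega) (by omega)
            have hk12 : k1 = k2 := Fin.ext (by rw [hv1, hv2])
            rw [hk12, hk2] at hk1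
            simp only [Prod.mk.injEq] at hk1
            omega
        obtain ⟨kB, hvB, hkB⟩ := hstep (yA+1) (by omega) (by omega)
        have hkBB : kB = ⟨r+1, prB⟩ := Fin.ext hvB
        rw [hkBB] at hkB
        show resSeq ℓ l n κ T ⟨r+1, prB⟩ = 0 ∨ resSeq ℓ l n κ T ⟨r+1, prB⟩ = ℓ
        have heqB : resSeq ℓ l n κ T ⟨r+1, prB⟩ =
            bar ℓ (κ jA + (((yA:ℤ)+1) - (0:ℤ))) := by
          simp only [resSeq, hkB]
          congr 1
          push_cast
          ring
        rw [heqB]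
        apply bar_half ℓ hℓ0
        have harg : 2*(κ jA + (((yA:ℤ)+1) - (0:ℤ))) = 2*(κ jA) + D := by
          rw [hDdef]
          have : (yC:ℤ) = (yA:ℤ) + 2 := by exact_mod_cast hyC2
          rw [this]
          push_cast
          ring
        rw [harg]
        exact hfold
    · -- xA ≤ xC, yC < yA
      exfalso
      rcases eq_or_lt_of_le hx with hxe | hxl
      · have hlt : r + 2 < r := entry_lt ⟨r+2, prC⟩ ⟨r, prA⟩ jA (xC, yC) (xA, yA) hTC hTA
          (Prod.mk_le_mk.mpr ⟨by omega, by omega⟩)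
          (by intro hh; simp only [Prod.mk.injEq] at hh; omega)
        omega
      · apply key_incomp xA yA xC yC hxl hy
        · intro P hP
          rcases Finset.mem_union.mp hP with h | h <;> rw [mem_Rect] at h
          · exact hmemA P h.1 h.2
          · exact hmemC P h.1 h.2
        · rw [hDdef]; try ring
    · -- xC < xA, yA ≤ yC
      exfalso
      rcases eq_or_lt_of_le hy with hye | hyl
      · have hlt : r + 2 < r := entry_lt ⟨r+2, prC⟩ ⟨r, prA⟩ jA (xC, yC) (xA, yA) hTC hTA
          (Prod.mk_le_mk.mpr ⟨by omega, by omega⟩)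
          (by intro hh; simp only [Prod.mk.injEq] at hh; omega)
        omega
      · apply key_incomp xC yC xA yA hx hyl
        · intro P hP
          rcases Finset.mem_union.mp hP with h | h <;> rw [mem_Rect] at h
          · exact hmemC P h.1 h.2
          · exact hmemA P h.1 h.2
        · rw [hDdef]; try ring
    · -- xC < xA, yC < yA : C strictly below-left of A
      exfalso
      have hlt : r + 2 < r := entry_lt ⟨r+2, prC⟩ ⟨r, prA⟩ jA (xC, yC) (xA, yA) hTC hTA
        (Prod.mk_le_mk.mpr ⟨by omega, by omega⟩)
        (by intro hh; simp only [Prod.mk.injEq] at hh; omega)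
      omega
end
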